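/- Let f̂ : {1,…,m}^d → ℝ satisfy |D_j f̂(𝐢)| < 1/2 for every direction j ∈ {1,…,d} and every 𝐢 with i_j > 1, where D_j is the finite difference along coordinate j. Let ĝ(𝐢) be the fractional part of f̂(𝐢), and let f̃ be produced by the multivariate sequential unwrapping algorithm: f̃(1,…,1) = ĝ(1,…,1), and for j = 1,…,d, for each prefix index in {1,…,m}^{j-1} with trailing coordinates fixed at 1, set f̃ along coordinate j by adding U(D_j ĝ), where U(u) = u if |u| < 1/2, 1+u if u < -1/2, -1+u if u > 1/2. Then with q* = ⌊f̂(1,…,1)⌋, f̃(𝐢) + q* = f̂(𝐢) for all 𝐢 ∈ {1,…,m}^d. -/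
import Mathlib


/-- The unwrapping increment. -/
noncomputable def U (u : ℝ) : ℝ :=
  if |u| < 1/2 then u else if u < -(1/2) then 1 + u else if u > 1/2 then -1 + u else u

lemma Ufract (a b : ℝ) (h : |a - b| < 1/2) :
    U (Int.fract a - Int.fract b) = a - b := by
  have ha := Int.fract_nonneg a
  have ha' := Int.fract_lt_one a
  have hb := Int.fract_nonneg b
  have hb' := Int.fract_lt_one b
  obtain ⟨hl, hr⟩ := abs_lt.mp h
  have key : Int.fract a - Int.fract b = (a - b) - ((⌊a⌋ : ℝ) - ⌊b⌋) := by
    unfold Int.fract; ring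
  have h1 : (⌊a⌋ - ⌊b⌋ : ℤ) ≤ 1 := by
    have h2 : ((⌊a⌋ - ⌊b⌋ : ℤ) : ℝ) < 2 := by push_cast; linarith
    have : (⌊a⌋ - ⌊b⌋ : ℤ) < 2 := by exact_mod_cast h2
    omega
  have h2 : (-1 : ℤ) ≤ ⌊a⌋ - ⌊b⌋ := by
    have h3 : (-2 : ℝ) < ((⌊a⌋ - ⌊b⌋ : ℤ) : ℝ) := by push_cast; linarith
    have : (-2 : ℤ) < ⌊a⌋ - ⌊b⌋ := by exact_mod_cast h3
    omega
  set n : ℤ := ⌊a⌋ - ⌊b⌋ with hn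
  have hcast : ((⌊a⌋ : ℝ) - ⌊b⌋) = (n : ℝ) := by push_cast [hn]; ring
  rw [key, hcast]
  interval_cases n <;> unfold U <;> push_cast <;> split_ifs with h1 h2 h3 <;>
    simp only [abs_lt, not_and_or, not_lt] at h1 <;> linarith

theorem stmt10 (d m : ℕ) (hd : 1 ≤ d) (hm : 2 ≤ m)
    (fh : (Fin d → ℕ) → ℝ)
    (hfh : ∀ i : Fin d → ℕ, (∀ k, 1 ≤ i k ∧ i k ≤ m) → ∀ j : Fin d, 2 ≤ i j →
      |fh i - fh (Function.update i j (i j - 1))| < 1/2)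
    (gh : (Fin d → ℕ) → ℝ) (hgh : ∀ i, gh i = Int.fract (fh i))
    (ftil : (Fin d → ℕ) → ℝ)
    (hinit : ftil (fun _ => 1) = gh (fun _ => 1))
    (hrec : ∀ i : Fin d → ℕ, (∀ k, 1 ≤ i k ∧ i k ≤ m) → ∀ j : Fin d,
      (∀ k, j < k → i k = 1) → 2 ≤ i j →
      ftil i = ftil (Function.update i j (i j - 1)) +
        U (gh i - gh (Function.update i j (i j - 1)))) :
    ∀ i : Fin d → ℕ, (∀ k, 1 ≤ i k ∧ i k ≤ m) →
      ftil i + (⌊fh (fun _ => 1)⌋ : ℝ) = fh i := by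
  suffices H : ∀ N : ℕ, ∀ i : Fin d → ℕ, Finset.univ.sum i = N →
      (∀ k, 1 ≤ i k ∧ i k ≤ m) → ftil i + (⌊fh (fun _ => 1)⌋ : ℝ) = fh i by
    intro i hi; exact H _ i rfl hi
  intro N
  induction N using Nat.strong_induction_on with
  | _ N ih =>
    intro i hsum hi
    by_cases hall : ∀ k, i k = 1
    · have hieq : i = fun _ => 1 := funext hall
      rw [hieq, hinit, hgh]
      exact Int.fract_add_floor (fh fun _ => 1)
    · push_neg at hall
      obtain ⟨k0, hk0⟩ := hall
      set S : Finset (Fin d) := Finset.univ.filter (fun k => 2 ≤ i k) with hS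
      have hSne : S.Nonempty := ⟨k0, Finset.mem_filter.mpr ⟨Finset.mem_univ _,
        by have := (hi k0).1; omega⟩⟩
      set j := S.max' hSne with hj
      have hj2 : 2 ≤ i j := (Finset.mem_filter.mp (S.max'_mem hSne)).2
      have hlater : ∀ k, j < k → i k = 1 := by
        intro k hk
        by_contra hne
        have h2 : 2 ≤ i k := by have := (hi k).1; omega
        exact absurd (S.le_max' k (Finset.mem_filter.mpr ⟨Finset.mem_univ _, h2⟩))
          (not_le.mpr hk)
      set i' := Function.update i j (i j - 1) with hi'def
      have hi' : ∀ k, 1 ≤ i' k ∧ i' k ≤ m := by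
        intro k
        by_cases hkj : k = j
        · subst hkj
          simp only [hi'def, Function.update_self]
          have := (hi j).2; omega
        · simp only [hi'def, Function.update_of_ne hkj]; exact hi k
      have hsum' : Finset.univ.sum i' < N := by
        rw [← hsum]
        apply Finset.sum_lt_sum
        · intro k _
          by_cases hkj : k = j
          · subst hkj
            simp only [hi'def, Function.update_self]; omega
          · simp [hi'def, Function.update_of_ne hkj]
        · exact ⟨j, Finset.mem_univ _, by simp only [hi'def, Function.update_self]; omega⟩
      have IH := ih _ hsum' i' rfl hi'
      have hrec' := hrec i hi j hlater hj2
      rw [hgh, hgh] at hrec'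
      rw [Ufract _ _ (hfh i hi j hj2)] at hrec'
      rw [hrec']
      linarith
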